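/- arXiv:2104.13106 — 4 statements merged into one kernel-verified Lean document; each statement's English description precedes it below -/
import Mathlib

section
/- Any restriction of an optimal transportation plan between discrete measures is optimal between its own marginals. -/
open Finset

/-- A transportation plan between discrete measures `μ` and `ν`. -/
def IsPlan {X : Type*} [Fintype X] (μ ν : X → ℝ) (π : X → X → ℝ) : Prop :=
  (∀ x y, 0 ≤ π x y) ∧ (∀ x, ∑ y, π x y = μ x) ∧ (∀ y, ∑ x, π x y = ν y)

/-- Total transport cost of a plan. -/
noncomputable def tcost {X : Type*} [Fintype X] (c π : X → X → ℝ) : ℝ :=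
  ∑ x, ∑ y, c x y * π x y

open Classical in
/-- Support of a plan, as a finite set of pairs. -/
noncomputable def spt {X : Type*} [Fintype X] (π : X → X → ℝ) : Finset (X × X) :=
  Finset.univ.filter (fun p => π p.1 p.2 ≠ 0)

open Classical in
/-- Support of a discrete measure. -/
noncomputable def msupp {X : Type*} [Fintype X] (μ : X → ℝ) : Finset X :=
  Finset.univ.filter (fun x => μ x ≠ 0)

/-- An optimal transportation plan. -/
def IsOptimal {X : Type*} [Fintype X] (c : X → X → ℝ) (μ ν : X → ℝ) (π : X → X → ℝ) : Prop :=
  IsPlan μ ν π ∧ ∀ π' : X → X → ℝ, IsPlan μ ν π' → tcost c π ≤ tcost c π'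

/-- A trim plan: optimal with support of minimal cardinality among optimal plans. -/
def IsTrim {X : Type*} [Fintype X] (c : X → X → ℝ) (μ ν : X → ℝ) (π : X → X → ℝ) : Prop :=
  IsOptimal c μ ν π ∧
    ∀ π' : X → X → ℝ, IsOptimal c μ ν π' → (spt π).card ≤ (spt π').card

/-- `L^∞` norm of the cost with respect to a plan: max of `c` on the support. -/
noncomputable def linf {X : Type*} [Fintype X] (c π : X → X → ℝ) : ℝ :=
  WithBot.unbotD 0 (((spt π).image (fun p => c p.1 p.2)).max)

/-- Optimal transport cost `W_c(μ,ν)`. -/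
noncomputable def Wc {X : Type*} [Fintype X] (c : X → X → ℝ) (μ ν : X → ℝ) : ℝ :=
  sInf {r | ∃ π, IsPlan μ ν π ∧ tcost c π = r}

/-- Infinity-Wasserstein cost `W_c^{(∞)}(μ,ν)`. -/
noncomputable def Winf {X : Type*} [Fintype X] (c : X → X → ℝ) (μ ν : X → ℝ) : ℝ :=
  sInf {r | ∃ π, IsPlan μ ν π ∧ linf c π = r}

/-- The deterministic plan `(Id, h)_# σ`. -/
def pushF {X : Type*} [DecidableEq X] (h : X → X) (σ : X → ℝ) : X → X → ℝ :=
  fun x y => if h x = y then σ x else 0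

/-- The deterministic plan `(h, Id)_# σ`. -/
def pushB {X : Type*} [DecidableEq X] (h : X → X) (σ : X → ℝ) : X → X → ℝ :=
  fun x y => if h y = x then σ y else 0

/-!
Exchange argument: if a plan `π'` with the marginals of `πr` were cheaper than `πr`, then
`π - πr + π'` would be a plan between `μ` and `ν` (nonnegative because `πr ≤ π`) whose cost,
by linearity, is `tcost c π - tcost c πr + tcost c π' < tcost c π`.
-/

section Plans

variable {X : Type*} [Fintype X]

theorem tcost_add (c π₁ π₂ : X → X → ℝ) : tcost c (π₁ + π₂) = tcost c π₁ + tcost c π₂ := by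
  simp only [tcost, Pi.add_apply, mul_add, Finset.sum_add_distrib]

theorem tcost_sub (c π₁ π₂ : X → X → ℝ) : tcost c (π₁ - π₂) = tcost c π₁ - tcost c π₂ := by
  simp only [tcost, Pi.sub_apply, mul_sub, Finset.sum_sub_distrib]

theorem isPlan_marginals {π : X → X → ℝ} (h0 : ∀ x y, 0 ≤ π x y) :
    IsPlan (fun x => ∑ y, π x y) (fun y => ∑ x, π x y) π :=
  ⟨h0, fun _ => rfl, fun _ => rfl⟩

theorem IsPlan.add {μ₁ ν₁ μ₂ ν₂ : X → ℝ} {π₁ π₂ : X → X → ℝ}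
    (h₁ : IsPlan μ₁ ν₁ π₁) (h₂ : IsPlan μ₂ ν₂ π₂) :
    IsPlan (μ₁ + μ₂) (ν₁ + ν₂) (π₁ + π₂) := by
  obtain ⟨h0₁, hμ₁, hν₁⟩ := h₁
  obtain ⟨h0₂, hμ₂, hν₂⟩ := h₂
  refine ⟨fun x y => add_nonneg (h0₁ x y) (h0₂ x y), fun x => ?_, fun y => ?_⟩
  · simp only [Pi.add_apply, Finset.sum_add_distrib, hμ₁, hμ₂]
  · simp only [Pi.add_apply, Finset.sum_add_distrib, hν₁, hν₂]

theorem IsPlan.sub {μ₁ ν₁ μ₂ ν₂ : X → ℝ} {π₁ π₂ : X → X → ℝ}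
    (h₁ : IsPlan μ₁ ν₁ π₁) (h₂ : IsPlan μ₂ ν₂ π₂) (hle : ∀ x y, π₂ x y ≤ π₁ x y) :
    IsPlan (μ₁ - μ₂) (ν₁ - ν₂) (π₁ - π₂) := by
  obtain ⟨-, hμ₁, hν₁⟩ := h₁
  obtain ⟨-, hμ₂, hν₂⟩ := h₂
  refine ⟨fun x y => sub_nonneg.mpr (hle x y), fun x => ?_, fun y => ?_⟩
  · simp only [Pi.sub_apply, Finset.sum_sub_distrib, hμ₁, hμ₂]
  · simp only [Pi.sub_apply, Finset.sum_sub_distrib, hν₁, hν₂]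

theorem IsPlan.exchange {μ ν μ' ν' : X → ℝ} {π πr π' : X → X → ℝ}
    (hπ : IsPlan μ ν π) (hπr : IsPlan μ' ν' πr) (hπ' : IsPlan μ' ν' π')
    (hle : ∀ x y, πr x y ≤ π x y) :
    IsPlan μ ν (π - πr + π') := by
  simpa only [sub_add_cancel] using (hπ.sub hπr hle).add hπ'

end Plans

theorem restriction_optimal_general {X : Type*} [Fintype X]
    (μ ν : X → ℝ) (c : X → X → ℝ) (π πr : X → X → ℝ)
    (hopt : IsOptimal c μ ν π)
    (hr0 : ∀ x y, 0 ≤ πr x y) (hrπ : ∀ x y, πr x y ≤ π x y) :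
    IsOptimal c (fun x => ∑ y, πr x y) (fun y => ∑ x, πr x y) πr := by
  obtain ⟨hπ, hmin⟩ := hopt
  refine ⟨isPlan_marginals hr0, fun π' hπ' => ?_⟩
  have hexch := hmin _ (hπ.exchange (isPlan_marginals hr0) hπ' hrπ)
  rw [tcost_add, tcost_sub] at hexch
  linarith

/-- any restriction of an optimal plan is optimal between its marginals. -/
theorem restriction_optimal {X : Type*} [Fintype X]
    (μ ν : X → ℝ) (c : X → X → ℝ) (π πr : X → X → ℝ)
    (hc : ∀ x y, 0 ≤ c x y)
    (hμν : ∑ x, μ x = ∑ y, ν y)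
    (hopt : IsOptimal c μ ν π)
    (hr0 : ∀ x y, 0 ≤ πr x y) (hrπ : ∀ x y, πr x y ≤ π x y) :
    IsOptimal c (fun x => ∑ y, πr x y) (fun y => ∑ x, πr x y) πr :=
  restriction_optimal_general μ ν c π πr hopt hr0 hrπ
end

section
/- Let μ = (1/4)(δ_{(0,0,0)} + δ_{(1,1,0)} + δ_{(1,0,1)} + δ_{(0,1,1)}) and ν = (1/4)(δ_{(1,1,1)} + δ_{(0,0,1)} + δ_{(0,1,0)} + δ_{(1,0,0)}) on ℝ³ with Euclidean distance cost. The plan π assigning mass 1/12 from each atom of μ to each of its three nearest atoms of ν (at distance 1) is an optimal transportation plan whose support has 12 points; in particular it cannot be written as (Id,h⁽¹⁾)_#μ⁽ᵈ⁾ + (h⁽²⁾,Id)_#ν⁽ᵈ⁾ since 12 > 2·4. -/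
open Finset

/-! Distinct vertices of the cube are at distance at least `1` and the two measures have
disjoint supports, so every plan costs at least its total mass; the edge plan moves all of
its mass along unit edges and attains this bound. A plan `(Id, h₁)_# μd + (h₂, Id)_# νd` has
at most one atom per atom of `μd` and of `νd`, hence at most `4 + 4 = 8 < 12` atoms. -/

namespace IsPlan

variable {X : Type*} [Fintype X] {μ ν : X → ℝ} {π : X → X → ℝ}

lemma le_left (hπ : IsPlan μ ν π) (x y : X) : π x y ≤ μ x :=
  hπ.2.1 x ▸ single_le_sum (fun y _ => hπ.1 x y) (mem_univ y)

lemma le_right (hπ : IsPlan μ ν π) (x y : X) : π x y ≤ ν y :=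
  hπ.2.2 y ▸ single_le_sum (fun x _ => hπ.1 x y) (mem_univ x)

lemma apply_self_eq_zero (hπ : IsPlan μ ν π) {x : X} (hx : μ x = 0 ∨ ν x = 0) :
    π x x = 0 := by
  rcases hx with hx | hx
  · exact le_antisymm (hx ▸ hπ.le_left x x) (hπ.1 x x)
  · exact le_antisymm (hx ▸ hπ.le_right x x) (hπ.1 x x)

lemma tcost_eq_mul_mass (hπ : IsPlan μ ν π) {c : X → X → ℝ} {d : ℝ}
    (hc : ∀ x y, π x y ≠ 0 → c x y = d) : tcost c π = d * ∑ x, μ x := by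
  simp_rw [mul_sum, ← hπ.2.1, mul_sum]
  refine sum_congr rfl fun x _ => sum_congr rfl fun y _ => ?_
  by_cases h : π x y = 0
  · simp [h]
  · rw [hc x y h]

lemma mul_mass_le_tcost (hπ : IsPlan μ ν π) (hμν : ∀ x, μ x = 0 ∨ ν x = 0)
    {c : X → X → ℝ} {d : ℝ} (hc : ∀ x y, x ≠ y → d ≤ c x y) :
    d * ∑ x, μ x ≤ tcost c π := by
  simp_rw [mul_sum, ← hπ.2.1, mul_sum]
  refine sum_le_sum fun x _ => sum_le_sum fun y _ => ?_
  rcases eq_or_ne x y with rfl | hxy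
  · simp [hπ.apply_self_eq_zero (hμν x)]
  · exact mul_le_mul_of_nonneg_right (hc x y hxy) (hπ.1 x y)

lemma isOptimal_of_cost_eq_min (hπ : IsPlan μ ν π) (hμν : ∀ x, μ x = 0 ∨ ν x = 0)
    {c : X → X → ℝ} {d : ℝ} (hc : ∀ x y, x ≠ y → d ≤ c x y)
    (hπc : ∀ x y, π x y ≠ 0 → c x y = d) : IsOptimal c μ ν π :=
  ⟨hπ, fun _ hπ' => hπ.tcost_eq_mul_mass hπc ▸ hπ'.mul_mass_le_tcost hμν hc⟩

end IsPlan

section Support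

variable {X : Type*} [Fintype X]

lemma msupp_ite {P : X → Prop} [DecidablePred P] {a : ℝ} (ha : a ≠ 0) :
    msupp (fun x => if P x then a else 0) = univ.filter P := by
  ext x
  rw [msupp, mem_filter, mem_filter]
  simp [ha]

lemma spt_ite {P : X → X → Prop} [DecidableRel P] {a : ℝ} (ha : a ≠ 0) :
    spt (fun x y => if P x y then a else 0) = univ.filter fun p : X × X => P p.1 p.2 := by
  ext p
  rw [spt, mem_filter, mem_filter]
  simp [ha]

lemma msupp_subset_of_le {σ μ : X → ℝ} (hσ : ∀ x, 0 ≤ σ x) (hσμ : ∀ x, σ x ≤ μ x) :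
    msupp σ ⊆ msupp μ := by
  intro x hx
  simp only [msupp, mem_filter, mem_univ, true_and] at hx ⊢
  exact fun hμ => hx (le_antisymm (hμ ▸ hσμ x) (hσ x))

variable [DecidableEq X]

lemma spt_add_subset (π₁ π₂ : X → X → ℝ) : spt (π₁ + π₂) ⊆ spt π₁ ∪ spt π₂ := by
  intro p hp
  simp only [spt, mem_union, mem_filter, mem_univ, true_and, Pi.add_apply] at hp ⊢
  by_contra! h
  exact hp (by rw [h.1, h.2, add_zero])

lemma card_spt_pushF_le (h : X → X) (σ : X → ℝ) : #(spt (pushF h σ)) ≤ #(msupp σ) := by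
  refine (card_le_card fun p hp => ?_).trans (card_image_le (f := fun x => (x, h x)))
  rw [spt, mem_filter] at hp
  simp only [pushF] at hp
  split_ifs at hp with hp'
  · exact mem_image.2 ⟨p.1, mem_filter.2 ⟨mem_univ _, hp.2⟩, by rw [hp']⟩
  · exact absurd rfl hp.2

lemma card_spt_pushB_le (h : X → X) (σ : X → ℝ) : #(spt (pushB h σ)) ≤ #(msupp σ) := by
  refine (card_le_card fun p hp => ?_).trans (card_image_le (f := fun y => (h y, y)))
  rw [spt, mem_filter] at hp
  simp only [pushB] at hp
  split_ifs at hp with hp'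
  · exact mem_image.2 ⟨p.2, mem_filter.2 ⟨mem_univ _, hp.2⟩, by rw [hp']⟩
  · exact absurd rfl hp.2

lemma card_spt_le_of_eq_pushF_add_pushB {μ ν μd νd : X → ℝ} {π : X → X → ℝ} {h₁ h₂ : X → X}
    (hμd : ∀ x, 0 ≤ μd x) (hνd : ∀ y, 0 ≤ νd y) (hμdμ : ∀ x, μd x ≤ μ x)
    (hνdν : ∀ y, νd y ≤ ν y) (hπ : ∀ x y, π x y = pushF h₁ μd x y + pushB h₂ νd x y) :
    #(spt π) ≤ #(msupp μ) + #(msupp ν) := by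
  obtain rfl : π = pushF h₁ μd + pushB h₂ νd := funext₂ hπ
  calc #(spt (pushF h₁ μd + pushB h₂ νd))
      ≤ #(spt (pushF h₁ μd)) + #(spt (pushB h₂ νd)) :=
        (card_le_card (spt_add_subset _ _)).trans (card_union_le _ _)
    _ ≤ #(msupp μd) + #(msupp νd) := add_le_add (card_spt_pushF_le _ _) (card_spt_pushB_le _ _)
    _ ≤ #(msupp μ) + #(msupp ν) :=
        add_le_add (card_le_card (msupp_subset_of_le hμd hμdμ))
          (card_le_card (msupp_subset_of_le hνd hνdν))

end Support

namespace Cube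

-- Definitionally the objects bound by `letI` in `cube_plan_optimal_not_diffusive`.
abbrev Vertex : Type := Fin 2 × Fin 2 × Fin 2

def parity (v : Vertex) : ℕ := (v.1.val + v.2.1.val + v.2.2.val) % 2

def hamming (v w : Vertex) : ℕ :=
  (if v.1 = w.1 then 0 else 1) + (if v.2.1 = w.2.1 then 0 else 1) +
    (if v.2.2 = w.2.2 then 0 else 1)

noncomputable def cost (v w : Vertex) : ℝ :=
  √(((v.1.val : ℝ) - (w.1.val : ℝ)) ^ 2 + ((v.2.1.val : ℝ) - (w.2.1.val : ℝ)) ^ 2 +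
    ((v.2.2.val : ℝ) - (w.2.2.val : ℝ)) ^ 2)

noncomputable def evenMeasure (v : Vertex) : ℝ := if parity v = 0 then 1/4 else 0

noncomputable def oddMeasure (w : Vertex) : ℝ := if parity w = 1 then 1/4 else 0

noncomputable def edgePlan (v w : Vertex) : ℝ :=
  if parity v = 0 ∧ parity w = 1 ∧ hamming v w = 1 then 1/12 else 0

lemma sq_sub_val_fin_two (a b : Fin 2) :
    ((a.val : ℝ) - b.val) ^ 2 = if a = b then 0 else 1 := by
  fin_cases a <;> fin_cases b <;> norm_num

lemma cost_eq_sqrt_hamming (v w : Vertex) : cost v w = √(hamming v w) := by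
  simp only [cost, hamming, sq_sub_val_fin_two]
  push_cast
  rfl

lemma one_le_hamming_of_ne : ∀ {v w : Vertex}, v ≠ w → 1 ≤ hamming v w := by
  decide

lemma one_le_cost_of_ne {v w : Vertex} (h : v ≠ w) : 1 ≤ cost v w := by
  rw [cost_eq_sqrt_hamming, Real.one_le_sqrt]
  exact_mod_cast one_le_hamming_of_ne h

lemma card_edges_from : ∀ v : Vertex,
    #{w | parity v = 0 ∧ parity w = 1 ∧ hamming v w = 1} = if parity v = 0 then 3 else 0 := by
  decide

lemma card_edges_to : ∀ w : Vertex,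
    #{v | parity v = 0 ∧ parity w = 1 ∧ hamming v w = 1} = if parity w = 1 then 3 else 0 := by
  decide

lemma isPlan_edgePlan : IsPlan evenMeasure oddMeasure edgePlan := by
  refine ⟨fun v w => ?_, fun v => ?_, fun w => ?_⟩
  · unfold edgePlan
    split_ifs <;> norm_num
  · simp only [edgePlan, evenMeasure]
    rw [← sum_filter, sum_const, card_edges_from]
    split_ifs <;> norm_num
  · simp only [edgePlan, oddMeasure]
    rw [← sum_filter, sum_const, card_edges_to]
    split_ifs <;> norm_num

lemma isOptimal_edgePlan : IsOptimal cost evenMeasure oddMeasure edgePlan := by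
  refine isPlan_edgePlan.isOptimal_of_cost_eq_min (fun v => ?_) (fun _ _ => one_le_cost_of_ne)
    (fun v w hvw => ?_)
  · by_cases h : parity v = 0 <;> simp [evenMeasure, oddMeasure, h]
  · unfold edgePlan at hvw
    split_ifs at hvw with h
    · rw [cost_eq_sqrt_hamming, h.2.2, Nat.cast_one, Real.sqrt_one]
    · exact absurd rfl hvw

lemma card_spt_edgePlan : #(spt edgePlan) = 12 := by
  unfold edgePlan
  rw [spt_ite (by norm_num)]
  decide

lemma card_msupp_evenMeasure : #(msupp evenMeasure) = 4 := by
  unfold evenMeasure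
  rw [msupp_ite (by norm_num)]
  decide

lemma card_msupp_oddMeasure : #(msupp oddMeasure) = 4 := by
  unfold oddMeasure
  rw [msupp_ite (by norm_num)]
  decide

end Cube

open Cube in
/-- the uniform plan on the 12 unit edges of the cube, between the uniform
measures on even and odd vertices, is optimal, has support of cardinality 12, and hence
admits no diffusive-model decomposition. -/
theorem cube_plan_optimal_not_diffusive :
    letI X := Fin 2 × Fin 2 × Fin 2
    letI par : X → ℕ := fun v => (v.1.val + v.2.1.val + v.2.2.val) % 2
    letI ham : X → X → ℕ := fun v w =>
      (if v.1 = w.1 then 0 else 1) + (if v.2.1 = w.2.1 then 0 else 1) +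
        (if v.2.2 = w.2.2 then 0 else 1)
    letI c : X → X → ℝ := fun v w =>
      Real.sqrt (((v.1.val : ℝ) - (w.1.val : ℝ)) ^ 2 +
        ((v.2.1.val : ℝ) - (w.2.1.val : ℝ)) ^ 2 +
        ((v.2.2.val : ℝ) - (w.2.2.val : ℝ)) ^ 2)
    letI μ : X → ℝ := fun v => if par v = 0 then 1/4 else 0
    letI ν : X → ℝ := fun w => if par w = 1 then 1/4 else 0
    letI π : X → X → ℝ := fun v w =>
      if par v = 0 ∧ par w = 1 ∧ ham v w = 1 then 1/12 else 0
    IsOptimal c μ ν π ∧ (spt π).card = 12 ∧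
      ¬ ∃ (μd νd : X → ℝ) (h₁ h₂ : X → X),
          (∀ x, 0 ≤ μd x) ∧ (∀ y, 0 ≤ νd y) ∧
          (∀ x, μd x ≤ μ x) ∧ (∀ y, νd y ≤ ν y) ∧
          (∀ x y, π x y = pushF h₁ μd x y + pushB h₂ νd x y) := by
  refine ⟨isOptimal_edgePlan, card_spt_edgePlan, ?_⟩
  rintro ⟨μd, νd, h₁, h₂, hμd, hνd, hμdμ, hνdν, hπ⟩
  have : #(spt edgePlan) ≤ #(msupp evenMeasure) + #(msupp oddMeasure) :=
    card_spt_le_of_eq_pushF_add_pushB hμd hνd hμdμ hνdν hπ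
  rw [card_spt_edgePlan, card_msupp_evenMeasure, card_msupp_oddMeasure] at this
  omega
end

section
/- Let μ, ν be discrete probability measures on a finite set X, c : X × X → ℝ≥0, and let α = min_{(A,B)∈K(μ,ν)} |∑_{x∈A}μ_x − ∑_{y∈B}ν_y| where K(μ,ν) is the collection of pairs of subsets A, B ⊆ X with |∑_{x∈A}μ_x − ∑_{y∈B}ν_y| > 0. Then for every p ≥ 1, W^{(∞)}_c(μ,ν) ≤ W_{c^p}(μ,ν)^{1/p} / α^{1/p}, a bound uniform in p and depending only on μ, ν. -/
open Finset

/-!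
Take an optimal plan `π` for the cost `c ^ p` whose support is as small as possible. Each edge
`(x₀, y₀)` of its support carries mass at least `α`. Either the other support edges connect `x₀`
to `y₀`, and then alternating `±1` around the resulting cycle gives a circulation along which `π`
can be moved, without raising the cost, until an entry vanishes, contradicting minimality; or the
component `A ⊔ B` of `x₀` in the support minus that edge is a cut, and
`π x₀ y₀ = μ(A) - ν(B) > 0`. Hence `c x y ^ p * α ≤ c x y ^ p * π x y ≤ W_{c^p}(μ, ν)` on the
support of `π`, which bounds the `L^∞` cost of `π`.
-/

theorem exists_pos_add_mul_nonneg_and_eq_zero {ι : Type*} [Fintype ι] {f d : ι → ℝ}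
    (hf : ∀ i, 0 ≤ f i) (hpos : ∀ i, d i < 0 → 0 < f i) (hneg : ∃ i, d i < 0) :
    ∃ t > 0, (∀ i, 0 ≤ f i + t * d i) ∧ ∃ i, f i ≠ 0 ∧ f i + t * d i = 0 := by
  classical
  obtain ⟨i, hi, hmin⟩ := (univ.filter fun i => d i < 0).exists_min_image (fun i => f i / -d i)
    (by simpa [Finset.filter_nonempty_iff] using hneg)
  rw [mem_filter] at hi
  have ht : 0 < f i / -d i := div_pos (hpos i hi.2) (neg_pos.2 hi.2)
  refine ⟨f i / -d i, ht, fun j => ?_, i, (hpos i hi.2).ne', ?_⟩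
  · rcases lt_or_ge (d j) 0 with hj | hj
    · have := hmin j (mem_filter.2 ⟨mem_univ j, hj⟩)
      rw [le_div_iff₀ (neg_pos.2 hj)] at this
      linarith
    · exact add_nonneg (hf j) (mul_nonneg ht.le hj)
  · field_simp [hi.2.ne]
    ring

section Supported

variable {X : Type*}

def supportedOn (S : Set (X × X)) : Submodule ℝ (X → X → ℝ) where
  carrier := {γ | ∀ x y, (x, y) ∉ S → γ x y = 0}
  add_mem' hγ hγ' x y h := by simp [hγ x y h, hγ' x y h]
  zero_mem' _ _ _ := rfl
  smul_mem' a γ hγ x y h := by simp [hγ x y h]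

theorem single_mem_supportedOn [DecidableEq X] {S : Set (X × X)} {x y : X} (h : (x, y) ∈ S) :
    Pi.single x (Pi.single y 1) ∈ supportedOn S := by
  intro x' y' h'
  by_cases hx : x' = x
  · subst hx
    have hy : y' ≠ y := fun hy => h' (hy ▸ h)
    simp [hy]
  · simp [hx]

end Supported

section Transport

variable {X : Type*} [Fintype X]

theorem mem_spt {π : X → X → ℝ} {e : X × X} : e ∈ spt π ↔ π e.1 e.2 ≠ 0 := by
  simp [spt]

def marginals : (X → X → ℝ) →ₗ[ℝ] (X → ℝ) × (X → ℝ) where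
  toFun π := (fun x => ∑ y, π x y, fun y => ∑ x, π x y)
  map_add' π π' := by ext <;> simp [Finset.sum_add_distrib]
  map_smul' a π := by ext <;> simp [Finset.mul_sum]

theorem isPlan_iff_marginals {μ ν : X → ℝ} {π : X → X → ℝ} :
    IsPlan μ ν π ↔ (∀ x y, 0 ≤ π x y) ∧ marginals π = (μ, ν) := by
  simp [IsPlan, marginals, Prod.ext_iff, funext_iff]

theorem marginals_single [DecidableEq X] (x y : X) :
    marginals (Pi.single x (Pi.single y 1)) = (Pi.single x (1 : ℝ), Pi.single y (1 : ℝ)) := by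
  ext z
  · by_cases hz : z = x <;> simp [marginals, hz]
  · by_cases hz : z = y <;> simp [marginals, Pi.single_apply, ite_apply, hz]

theorem exists_neg_of_marginals_eq_zero {γ : X → X → ℝ} (hγ : marginals γ = 0) (hne : γ ≠ 0) :
    ∃ x y, γ x y < 0 := by
  obtain ⟨x, hx⟩ := Function.ne_iff.1 hne
  obtain ⟨y, hy⟩ := Function.ne_iff.1 hx
  have hrow : ∑ y, -γ x y = 0 := by
    rw [Finset.sum_neg_distrib, neg_eq_zero]
    exact congrFun (congrArg Prod.fst hγ) x
  obtain ⟨y', -, hy'⟩ :=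
    exists_pos_of_sum_zero_of_exists_nonzero _ hrow ⟨y, mem_univ y, neg_ne_zero.2 hy⟩
  exact ⟨x, y', neg_pos.1 hy'⟩

theorem isPlan_mul {μ ν : X → ℝ} (hμ : ∀ x, 0 ≤ μ x) (hν : ∀ y, 0 ≤ ν y)
    (hμ1 : ∑ x, μ x = 1) (hν1 : ∑ y, ν y = 1) : IsPlan μ ν fun x y => μ x * ν y :=
  ⟨fun x y => mul_nonneg (hμ x) (hν y), fun x => by rw [← Finset.mul_sum, hν1, mul_one],
    fun y => by rw [← Finset.sum_mul, hμ1, one_mul]⟩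

theorem isCompact_setOf_isPlan (μ ν : X → ℝ) : IsCompact {π | IsPlan μ ν π} := by
  have hK : {π | IsPlan μ ν π} = Set.Ici 0 ∩ marginals ⁻¹' {(μ, ν)} := by
    ext π
    simp [isPlan_iff_marginals, Pi.le_def]
  refine (isCompact_Icc (a := 0) (b := fun x _ => μ x)).of_isClosed_subset ?_ ?_
  · rw [hK]
    exact isClosed_Ici.inter
      (isClosed_singleton.preimage (LinearMap.continuous_of_finiteDimensional _))
  · rintro π ⟨hnn, hrow, -⟩
    refine ⟨hnn, fun x y => ?_⟩
    show π x y ≤ μ x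
    rw [← hrow x]
    exact Finset.single_le_sum (fun y _ => hnn x y) (mem_univ y)

theorem tcost_nonneg {c π : X → X → ℝ} (hc : ∀ x y, 0 ≤ c x y) (hπ : ∀ x y, 0 ≤ π x y) :
    0 ≤ tcost c π :=
  Finset.sum_nonneg fun x _ => Finset.sum_nonneg fun y _ => mul_nonneg (hc x y) (hπ x y)

theorem mul_le_tcost {c π : X → X → ℝ} (hc : ∀ x y, 0 ≤ c x y) (hπ : ∀ x y, 0 ≤ π x y)
    (x y : X) : c x y * π x y ≤ tcost c π := by
  rw [tcost, ← Fintype.sum_prod_type']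
  exact Finset.single_le_sum (f := fun e : X × X => c e.1 e.2 * π e.1 e.2)
    (fun e _ => mul_nonneg (hc e.1 e.2) (hπ e.1 e.2)) (mem_univ (x, y))

theorem tcost_add_smul (c π γ : X → X → ℝ) (t : ℝ) :
    tcost c (π + t • γ) = tcost c π + t * tcost c γ := by
  simp only [tcost, Pi.add_apply, Pi.smul_apply, smul_eq_mul, mul_add, Finset.sum_add_distrib,
    Finset.mul_sum]
  congr! 3
  ring

theorem tcost_neg (c γ : X → X → ℝ) : tcost c (-γ) = -tcost c γ := by
  simp [tcost]

theorem exists_isOptimal (c : X → X → ℝ) {μ ν : X → ℝ} (hne : ∃ π, IsPlan μ ν π) :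
    ∃ π, IsOptimal c μ ν π := by
  have hcont : Continuous (tcost c) := by
    unfold tcost
    fun_prop
  obtain ⟨π, hπ, hmin⟩ := (isCompact_setOf_isPlan μ ν).exists_isMinOn hne hcont.continuousOn
  exact ⟨π, hπ, fun π' hπ' => hmin hπ'⟩

theorem exists_isTrim {c : X → X → ℝ} {μ ν : X → ℝ} (hne : ∃ π, IsOptimal c μ ν π) :
    ∃ π, IsTrim c μ ν π := by
  obtain ⟨π, hπ, hmin⟩ := exists_minimalFor_of_wellFoundedLT _ (fun π => (spt π).card) hne
  exact ⟨π, hπ, fun π' hπ' => (le_total _ _).elim (hmin hπ') id⟩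

theorem IsOptimal.Wc_eq {c π : X → X → ℝ} {μ ν : X → ℝ} (hπ : IsOptimal c μ ν π) :
    Wc c μ ν = tcost c π :=
  IsLeast.csInf_eq ⟨⟨π, hπ.1, rfl⟩, by rintro _ ⟨π', hπ', rfl⟩; exact hπ.2 π' hπ'⟩

theorem linf_nonneg {c π : X → X → ℝ} (hc : ∀ x y, 0 ≤ c x y) : 0 ≤ linf c π := by
  unfold linf
  cases h : ((spt π).image fun e => c e.1 e.2).max with
  | bot => rfl
  | coe r =>
    obtain ⟨e, -, rfl⟩ := Finset.mem_image.1 (Finset.mem_of_max h)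
    exact hc e.1 e.2

theorem linf_le {c π : X → X → ℝ} {M : ℝ} (hM : 0 ≤ M) (hle : ∀ x y, π x y ≠ 0 → c x y ≤ M) :
    linf c π ≤ M := by
  refine (WithBot.unbotD_le_iff fun _ => hM).2 (Finset.max_le fun r hr => ?_)
  obtain ⟨e, he, rfl⟩ := Finset.mem_image.1 hr
  exact WithBot.coe_le_coe.2 (hle e.1 e.2 (mem_spt.1 he))

theorem Winf_le_linf {c π : X → X → ℝ} {μ ν : X → ℝ} (hc : ∀ x y, 0 ≤ c x y)
    (hπ : IsPlan μ ν π) : Winf c μ ν ≤ linf c π :=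
  csInf_le ⟨0, by rintro _ ⟨π', -, rfl⟩; exact linf_nonneg hc⟩ ⟨π, hπ, rfl⟩

-- `A` and `B` are the vertices joined to `x₀` by paths of edges in `S`; reachability is encoded
-- by the marginals of combinations of those edges, so that no path has to be built.
theorem exists_cut_of_notMem_map_marginals [DecidableEq X] {S : Set (X × X)} {x₀ y₀ : X}
    (h : marginals (Pi.single x₀ (Pi.single y₀ 1)) ∉ (supportedOn S).map marginals) :
    ∃ A B : Finset X, x₀ ∈ A ∧ y₀ ∉ B ∧ ∀ x y, (x, y) ∈ S → (x ∈ A ↔ y ∈ B) := by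
  classical
  set M := (supportedOn S).map marginals
  refine ⟨univ.filter fun x => ((Pi.single x₀ 1 - Pi.single x 1 : X → ℝ), (0 : X → ℝ)) ∈ M,
    univ.filter fun y => ((Pi.single x₀ 1 : X → ℝ), (Pi.single y 1 : X → ℝ)) ∈ M,
    by simp [← Prod.zero_eq_mk], by simpa [marginals_single] using h, fun x y hxy => ?_⟩
  have hedge : ((Pi.single x 1 : X → ℝ), (Pi.single y 1 : X → ℝ)) ∈ M :=
    marginals_single x y ▸ Submodule.mem_map_of_mem (single_mem_supportedOn hxy)
  have := M.add_mem_iff_left hedge (x := ((Pi.single x₀ 1 - Pi.single x 1 : X → ℝ), (0 : X → ℝ)))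
  simpa using this.symm

theorem apply_eq_sum_sub_sum_of_cut {μ ν : X → ℝ} {π : X → X → ℝ}
    (hrow : ∀ x, ∑ y, π x y = μ x) (hcol : ∀ y, ∑ x, π x y = ν y)
    {A B : Finset X} {x₀ y₀ : X} (hx₀ : x₀ ∈ A) (hy₀ : y₀ ∉ B)
    (hcut : ∀ x y, π x y ≠ 0 → (x, y) ≠ (x₀, y₀) → (x ∈ A ↔ y ∈ B)) :
    π x₀ y₀ = ∑ x ∈ A, μ x - ∑ y ∈ B, ν y := by
  classical
  have hsplit : ∑ x ∈ A, μ x - ∑ y ∈ B, ν y =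
      ∑ e : X × X, ((if e.1 ∈ A then 1 else 0) - (if e.2 ∈ B then 1 else 0)) * π e.1 e.2 := by
    rw [Fintype.sum_prod_type]
    simp only [sub_mul, Finset.sum_sub_distrib]
    rw [Finset.sum_comm (γ := X) (f := fun _ y => (if y ∈ B then (1 : ℝ) else 0) * _)]
    simp [ite_mul, hrow, hcol]
  rw [hsplit, Fintype.sum_eq_single (x₀, y₀) fun e he => ?_]
  · simp [hx₀, hy₀]
  · by_cases hπ : π e.1 e.2 = 0
    · simp [hπ]
    · simp [hcut e.1 e.2 hπ he]

section Trim

variable {c π : X → X → ℝ} {μ ν : X → ℝ}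

theorem IsTrim.tcost_pos_of_marginals_eq_zero (htrim : IsTrim c μ ν π) {γ : X → X → ℝ}
    (hγ : marginals γ = 0) (hsupp : ∀ x y, π x y = 0 → γ x y = 0) (hneg : ∃ x y, γ x y < 0) :
    0 < tcost c γ := by
  obtain ⟨⟨hplan, hopt⟩, hmin⟩ := htrim
  rw [isPlan_iff_marginals] at hplan
  by_contra! hcost
  obtain ⟨t, ht, hnn, ⟨x₀, y₀⟩, hne, hzero⟩ :=
    exists_pos_add_mul_nonneg_and_eq_zero (f := Function.uncurry π) (d := Function.uncurry γ)
      (fun e => hplan.1 e.1 e.2)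
      (fun e he => (hplan.1 e.1 e.2).lt_of_ne' fun h => he.ne (hsupp e.1 e.2 h))
      (by simpa using hneg)
  have hplan' : IsPlan μ ν (π + t • γ) := by
    refine isPlan_iff_marginals.2 ⟨fun x y => hnn (x, y), ?_⟩
    rw [map_add, map_smul, hγ, smul_zero, add_zero, hplan.2]
  have hopt' : IsOptimal c μ ν (π + t • γ) := ⟨hplan', fun ρ hρ => by
    rw [tcost_add_smul]
    nlinarith [hopt ρ hρ]⟩
  have hssub : spt (π + t • γ) ⊂ spt π := by
    refine Finset.ssubset_iff_of_subset (fun e he => ?_) |>.2 ⟨(x₀, y₀), mem_spt.2 hne, ?_⟩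
    · rw [mem_spt] at he ⊢
      exact fun h => he (by simp [h, hsupp _ _ h])
    · simpa [mem_spt] using hzero
  exact (hmin _ hopt').not_gt (Finset.card_lt_card hssub)

theorem IsTrim.eq_zero_of_marginals_eq_zero (htrim : IsTrim c μ ν π) {γ : X → X → ℝ}
    (hγ : marginals γ = 0) (hsupp : ∀ x y, π x y = 0 → γ x y = 0) : γ = 0 := by
  by_contra hne
  have hpos := htrim.tcost_pos_of_marginals_eq_zero hγ hsupp
    (exists_neg_of_marginals_eq_zero hγ hne)
  have hγ' : marginals (-γ) = 0 := by rw [map_neg, hγ, neg_zero]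
  have hneg := htrim.tcost_pos_of_marginals_eq_zero hγ' (fun x y h => by simp [hsupp x y h])
    (exists_neg_of_marginals_eq_zero hγ' (neg_ne_zero.2 hne))
  rw [tcost_neg] at hneg
  linarith

theorem IsTrim.le_apply_of_ne_zero (htrim : IsTrim c μ ν π) {α : ℝ} (hα : ∀ A B : Finset X,
      0 < ∑ x ∈ A, μ x - ∑ y ∈ B, ν y → α ≤ ∑ x ∈ A, μ x - ∑ y ∈ B, ν y)
    {x₀ y₀ : X} (h₀ : π x₀ y₀ ≠ 0) : α ≤ π x₀ y₀ := by
  classical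
  obtain ⟨hnn, hrow, hcol⟩ := htrim.1.1
  set S : Set (X × X) := {e | π e.1 e.2 ≠ 0 ∧ e ≠ (x₀, y₀)}
  by_cases hmem : marginals (Pi.single x₀ (Pi.single y₀ 1)) ∈ (supportedOn S).map marginals
  · exfalso
    obtain ⟨δ, hδS, hδ⟩ := hmem
    have hcirc := htrim.eq_zero_of_marginals_eq_zero
      (γ := Pi.single x₀ (Pi.single y₀ 1) - δ) (by rw [map_sub, hδ, sub_self]) fun x y hxy => by
        have hx : (x, y) ∉ ({(x₀, y₀)} : Set (X × X)) := fun h => h₀ (by simp_all)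
        rw [Pi.sub_apply, Pi.sub_apply, single_mem_supportedOn (Set.mem_singleton _) x y hx,
          hδS x y (by simp [S, hxy]), sub_zero]
    simpa [hδS x₀ y₀ (by simp [S])] using congrFun (congrFun hcirc x₀) y₀
  · obtain ⟨A, B, hA, hB, hcut⟩ := exists_cut_of_notMem_map_marginals hmem
    have hπ := apply_eq_sum_sub_sum_of_cut hrow hcol hA hB fun x y hxy hne => hcut x y ⟨hxy, hne⟩
    exact hπ ▸ hα A B (hπ ▸ (hnn x₀ y₀).lt_of_ne' h₀)

end Trim

end Transport

/-- uniform bound `W^{(∞)}_c(μ,ν) ≤ W_{c^p}(μ,ν)^{1/p} / α^{1/p}` for all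
`p ≥ 1`, where `α` depends only on `μ` and `ν`. -/
theorem Winf_le_Wcp_div_alpha_uniform {X : Type*} [Fintype X]
    (μ ν : X → ℝ) (c : X → X → ℝ)
    (hμpos : ∀ x, 0 < μ x) (hνpos : ∀ y, 0 < ν y)
    (hμ1 : ∑ x, μ x = 1) (hν1 : ∑ y, ν y = 1)
    (hc : ∀ x y, 0 ≤ c x y)
    (α : ℝ)
    (hα : α = sInf {r | ∃ A B : Finset X,
      r = |∑ x ∈ A, μ x - ∑ y ∈ B, ν y| ∧ 0 < r})
    (hαpos : 0 < α) :
    ∀ p : ℝ, 1 ≤ p →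
      Winf c μ ν ≤ (Wc (fun x y => c x y ^ p) μ ν) ^ (1 / p) / α ^ (1 / p) := by
  intro p hp
  have hcp : ∀ x y, 0 ≤ c x y ^ p := fun x y => Real.rpow_nonneg (hc x y) p
  obtain ⟨π, htrim⟩ := exists_isTrim <| exists_isOptimal (fun x y => c x y ^ p)
    ⟨_, isPlan_mul (fun x => (hμpos x).le) (fun y => (hνpos y).le) hμ1 hν1⟩
  have hα_le : ∀ A B : Finset X,
      0 < ∑ x ∈ A, μ x - ∑ y ∈ B, ν y → α ≤ ∑ x ∈ A, μ x - ∑ y ∈ B, ν y := fun A B hd =>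
    hα ▸ csInf_le ⟨0, fun _ ⟨_, _, _, hr⟩ => hr.le⟩ ⟨A, B, (abs_of_pos hd).symm, hd⟩
  set T := Wc (fun x y => c x y ^ p) μ ν
  have hT : T = tcost (fun x y => c x y ^ p) π := htrim.1.Wc_eq
  have hTnn : 0 ≤ T := hT ▸ tcost_nonneg hcp htrim.1.1.1
  have hedge : ∀ x y, π x y ≠ 0 → c x y ≤ (T / α) ^ p⁻¹ := fun x y hxy => by
    refine (Real.le_rpow_inv_iff_of_pos (hc x y) (by positivity) (by linarith)).2 ?_
    rw [le_div_iff₀ hαpos, hT]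
    calc c x y ^ p * α ≤ c x y ^ p * π x y :=
          mul_le_mul_of_nonneg_left (htrim.le_apply_of_ne_zero hα_le hxy) (hcp x y)
      _ ≤ _ := mul_le_tcost hcp htrim.1.1.1 x y
  calc Winf c μ ν ≤ linf c π := Winf_le_linf hc htrim.1.1
    _ ≤ (T / α) ^ p⁻¹ := linf_le (by positivity) hedge
    _ = T ^ (1 / p) / α ^ (1 / p) := by rw [one_div, Real.div_rpow hTnn hαpos.le]
end

section
/- Let μ = (1/2)δ_0 + (1/2)δ_1 and ν_ε = ((1−ε)/2)δ_0 + ((1+ε)/2)δ_1 on ℝ, with ε ∈ (0,1), and cost c₂(x,y) = |x−y|². Then W^{(∞)}_2(μ,ν_ε) = 1 and W₂²(μ,ν_ε) = ε/2. Consequently, for any constant C > 0 there exists ε ∈ (0,1) with (W^{(∞)}(μ,ν_ε))³ > C · W₂²(μ,ν_ε), so no estimate of the form (W^{(∞)})^{p+n} ≤ C·W_p^p with C independent of ν holds in the discrete setting. -/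
open Finset

/-
Every plan from `(δ₀ + δ₁)/2` to `ν_ε` must send mass at least `ε/2` from `0` to `1`,
since the diagonal entry `π 1 1` is bounded by `μ 1 = 1/2` while `ν_ε 1 = (1 + ε)/2`.
So the pair `(0, 1)`, of cost `1`, lies in the support of every plan and `W^{(∞)} = 1`,
while the plan moving exactly `ε/2` from `0` to `1` has quadratic cost `ε/2`.
Letting `ε → 0` defeats any constant `C`.
-/

section General

variable {X : Type*} [Fintype X] {c : X → X → ℝ} {μ ν : X → ℝ} {π : X → X → ℝ}

theorem IsPlan.le_left_s16 (hπ : IsPlan μ ν π) (x y : X) : π x y ≤ μ x := by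
  rw [← hπ.2.1 x]
  exact Finset.single_le_sum (fun y _ => hπ.1 x y) (Finset.mem_univ y)

theorem linf_eq_of_le_of_ne_zero {x₀ y₀ : X} (h₀ : π x₀ y₀ ≠ 0)
    (hle : ∀ x y, π x y ≠ 0 → c x y ≤ c x₀ y₀) : linf c π = c x₀ y₀ := by
  classical
  have hmem : (x₀, y₀) ∈ spt π := by simp [spt, h₀]
  have hmax : ((spt π).image fun p => c p.1 p.2).max = c x₀ y₀ := by
    refine le_antisymm (Finset.max_le fun r hr => ?_)
      (Finset.le_max (Finset.mem_image_of_mem (fun p : X × X => c p.1 p.2) hmem))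
    obtain ⟨p, hp, rfl⟩ := Finset.mem_image.mp hr
    exact WithBot.coe_le_coe.mpr (hle p.1 p.2 (Finset.mem_filter.mp hp).2)
  rw [linf, hmax, WithBot.unbotD_coe]

theorem Wc_eq_tcost_of_isOptimal (hπ : IsOptimal c μ ν π) : Wc c μ ν = tcost c π :=
  IsLeast.csInf_eq ⟨⟨π, hπ.1, rfl⟩, by
    rintro _ ⟨π', hπ', rfl⟩
    exact hπ.2 π' hπ'⟩

theorem Winf_eq_linf_of_forall_le (hπ : IsPlan μ ν π)
    (hmin : ∀ π', IsPlan μ ν π' → linf c π ≤ linf c π') : Winf c μ ν = linf c π :=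
  IsLeast.csInf_eq ⟨⟨π, hπ, rfl⟩, by
    rintro _ ⟨π', hπ', rfl⟩
    exact hmin π' hπ'⟩

end General

namespace TwoPoint

noncomputable section

abbrev cost : Fin 2 → Fin 2 → ℝ := fun i j => |(i.val : ℝ) - (j.val : ℝ)|

abbrev μ : Fin 2 → ℝ := fun _ => 1/2

abbrev ν (ε : ℝ) : Fin 2 → ℝ := fun j => if j = 0 then (1 - ε)/2 else (1 + ε)/2

def optPlan (ε : ℝ) : Fin 2 → Fin 2 → ℝ := ![![(1 - ε)/2, ε/2], ![0, 1/2]]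

variable {ε : ℝ} {π : Fin 2 → Fin 2 → ℝ}

theorem isPlan_optPlan (h0 : 0 ≤ ε) (h1 : ε ≤ 1) : IsPlan μ (ν ε) (optPlan ε) := by
  refine ⟨fun x y => ?_, fun x => ?_, fun y => ?_⟩
  · fin_cases x <;> fin_cases y <;> simp [optPlan] <;> linarith
  · fin_cases x <;> simp [optPlan, μ, Fin.sum_univ_two]
    ring
  · fin_cases y <;> simp [optPlan, ν, Fin.sum_univ_two]
    ring

theorem half_le_apply_zero_one (hπ : IsPlan μ (ν ε) π) : ε/2 ≤ π 0 1 := by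
  have hcol : π 0 1 + π 1 1 = (1 + ε)/2 := by
    simpa [Fin.sum_univ_two, ν] using hπ.2.2 1
  have hdiag : π 1 1 ≤ 1/2 := hπ.le_left_s16 1 1
  linarith

theorem cost_le_one (i j : Fin 2) : cost i j ≤ 1 := by
  fin_cases i <;> fin_cases j <;> norm_num [cost]

theorem linf_eq_one (hε : 0 < ε) (hπ : IsPlan μ (ν ε) π) : linf cost π = 1 := by
  have h01 : π 0 1 ≠ 0 := by linarith [half_le_apply_zero_one hπ]
  have hcost : cost 0 1 = 1 := by norm_num [cost]
  rw [← hcost]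
  exact linf_eq_of_le_of_ne_zero h01 fun x y _ => hcost ▸ cost_le_one x y

theorem tcost_sq (π : Fin 2 → Fin 2 → ℝ) :
    tcost (fun i j => cost i j ^ 2) π = π 0 1 + π 1 0 := by
  simp [tcost, Fin.sum_univ_two, cost]

theorem tcost_sq_optPlan (ε : ℝ) : tcost (fun i j => cost i j ^ 2) (optPlan ε) = ε/2 := by
  rw [tcost_sq]
  simp [optPlan]

theorem isOptimal_optPlan (h0 : 0 ≤ ε) (h1 : ε ≤ 1) :
    IsOptimal (fun i j => cost i j ^ 2) μ (ν ε) (optPlan ε) := by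
  refine ⟨isPlan_optPlan h0 h1, fun π hπ => ?_⟩
  rw [tcost_sq_optPlan, tcost_sq]
  linarith [half_le_apply_zero_one hπ, hπ.1 1 0]

theorem Winf_eq_one (h0 : 0 < ε) (h1 : ε ≤ 1) : Winf cost μ (ν ε) = 1 := by
  have hplan := isPlan_optPlan h0.le h1
  have hmin : ∀ π', IsPlan μ (ν ε) π' → linf cost (optPlan ε) ≤ linf cost π' := by
    intro π' hπ'
    rw [linf_eq_one h0 hplan, linf_eq_one h0 hπ']
  rw [Winf_eq_linf_of_forall_le hplan hmin, linf_eq_one h0 hplan]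

theorem Wc_sq_eq (h0 : 0 ≤ ε) (h1 : ε ≤ 1) : Wc (fun i j => cost i j ^ 2) μ (ν ε) = ε/2 :=
  (Wc_eq_tcost_of_isOptimal (isOptimal_optPlan h0 h1)).trans (tcost_sq_optPlan ε)

end

end TwoPoint

/-- for `μ = (δ₀ + δ₁)/2` and `ν_ε = ((1-ε)δ₀ + (1+ε)δ₁)/2` on `{0,1} ⊂ ℝ`
with quadratic cost, `W^{(∞)} = 1` while `W₂² = ε/2`; hence no bound
`(W^{(∞)})³ ≤ C·W₂²` with `C` independent of `ν` can hold. -/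
theorem no_uniform_discrete_bound :
    letI X := Fin 2
    letI c : X → X → ℝ := fun i j => |(i.val : ℝ) - (j.val : ℝ)|
    letI μ : X → ℝ := fun _ => 1/2
    letI ν : ℝ → X → ℝ := fun ε j => if j = 0 then (1 - ε)/2 else (1 + ε)/2
    (∀ ε ∈ Set.Ioo (0:ℝ) 1,
      Winf c μ (ν ε) = 1 ∧ Wc (fun i j => c i j ^ 2) μ (ν ε) = ε / 2) ∧
    (∀ C : ℝ, 0 < C → ∃ ε ∈ Set.Ioo (0:ℝ) 1,
      (Winf c μ (ν ε)) ^ 3 > C * Wc (fun i j => c i j ^ 2) μ (ν ε)) := by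
  refine ⟨fun ε ⟨h0, h1⟩ =>
    ⟨TwoPoint.Winf_eq_one h0 h1.le, TwoPoint.Wc_sq_eq h0.le h1.le⟩, fun C hC => ?_⟩
  have hε : 1 / (C + 1) ∈ Set.Ioo (0:ℝ) 1 :=
    ⟨by positivity, (div_lt_one (by linarith)).mpr (by linarith)⟩
  have hCε : C * (1 / (C + 1)) < 1 := by
    rw [mul_one_div, div_lt_one (by linarith)]
    linarith
  refine ⟨1 / (C + 1), hε, ?_⟩
  rw [TwoPoint.Winf_eq_one hε.1 hε.2.le, TwoPoint.Wc_sq_eq hε.1.le hε.2.le]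
  linarith
end
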